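/- Fix ℏ > 0 and ω > 0, and define ψ : ℝ \ {0} → ℝ by ψ(x) = |2x|^{-1/4} e^{−ω|x|/ℏ}. Then ψ satisfies, at every x ≠ 0, the eigenvalue equation of the canonically transformed harmonic-oscillator Hamiltonian: −(ℏ²/2) |x| ψ''(x) − (ℏ²/2) (d²/dx²)( |x| ψ )(x) + ω² |x| ψ(x) + (ℏ²/16) |x|^{-1} ψ(x) = (ℏω/2) ψ(x). In other words, ψ is an eigenfunction with eigenvalue ℏω/2 of the operator H' = (1/2)|q̂'| p̂'² + (1/2) p̂'² |q̂'| + ω² |q̂'| + (ℏ²/16) |q̂'|^{-1}, where q̂' is multiplication by x and p̂' = −iℏ d/dx. -/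

import Mathlib

open Real

/-- `ψ(x) = |2x|^{-1/4} e^{−ω|x|/ℏ}`, the transformed ground state of the harmonic
oscillator (defined for `x ≠ 0`; the value at `0` is irrelevant junk). -/
noncomputable def groundState (ℏ ω : ℝ) : ℝ → ℝ := fun x =>
  |2 * x| ^ (-(1 / 4 : ℝ)) * Real.exp (-(ω * |x|) / ℏ)

/-!
Both `ψ` and `|x| ψ` are functions of `t = |x|` of the form `t ^ a e^{-κ t}` with `κ = ω / ℏ`
(`a = -1/4` and `a = 3/4`), and away from `0` the second derivative of `f ∘ |·|` is `f'' ∘ |·|`.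
Since `(t ^ a e^{-κ t})'' = ((a/t - κ)² - a/t²) t ^ a e^{-κ t}`, the left-hand side becomes
`(-ℏ² a² / t + ℏ² (2a + 1) κ - ℏ² κ² t + ω² t + ℏ² / (16 t)) ψ`, which is `(ℏ ω / 2) ψ`
exactly for `a = -1/4`.
-/

open Filter Topology

lemma deriv_deriv_comp_abs (f : ℝ → ℝ) {x : ℝ} (hx : x ≠ 0) :
    deriv (deriv fun y => f |y|) x = deriv (deriv f) |x| := by
  rcases hx.lt_or_gt with hneg | hpos
  · have hf : (fun y => f |y|) =ᶠ[𝓝 x] fun y => f (-y) := by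
      filter_upwards [eventually_lt_nhds hneg] with y hy
      rw [abs_of_neg hy]
    rw [hf.deriv.deriv_eq, funext (deriv_comp_neg f), deriv.fun_neg, deriv_comp_neg, neg_neg,
      abs_of_neg hneg]
  · have hf : (fun y => f |y|) =ᶠ[𝓝 x] f := by
      filter_upwards [eventually_gt_nhds hpos] with y hy
      rw [abs_of_pos hy]
    rw [hf.deriv.deriv_eq, abs_of_pos hpos]

noncomputable def powExpDecay (a κ t : ℝ) : ℝ := t ^ a * exp (-(κ * t))

lemma mul_powExpDecay {a : ℝ} (ha : a + 1 ≠ 0) (κ : ℝ) {t : ℝ} (ht : 0 ≤ t) :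
    t * powExpDecay a κ t = powExpDecay (a + 1) κ t := by
  rw [powExpDecay, powExpDecay, rpow_add' ht ha, rpow_one]
  ring

lemma hasDerivAt_powExpDecay (a κ : ℝ) {t : ℝ} (ht : 0 < t) :
    HasDerivAt (powExpDecay a κ) ((a / t - κ) * powExpDecay a κ t) t := by
  have hpow := hasDerivAt_rpow_const (p := a) (Or.inl ht.ne')
  have hexp : HasDerivAt (fun s => exp (-(κ * s))) (exp (-(κ * t)) * -κ) t := by
    simpa using ((hasDerivAt_id t).const_mul κ).neg.exp
  refine (hpow.fun_mul hexp).congr_deriv ?_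
  rw [powExpDecay, rpow_sub_one ht.ne']
  field_simp
  ring

lemma deriv_deriv_powExpDecay (a κ : ℝ) {t : ℝ} (ht : 0 < t) :
    deriv (deriv (powExpDecay a κ)) t = ((a / t - κ) ^ 2 - a / t ^ 2) * powExpDecay a κ t := by
  have hderiv : deriv (powExpDecay a κ) =ᶠ[𝓝 t] fun s => (a / s - κ) * powExpDecay a κ s := by
    filter_upwards [eventually_gt_nhds ht] with s hs
    exact (hasDerivAt_powExpDecay a κ hs).deriv
  have hcoef : HasDerivAt (fun s => a / s - κ) (-(a / t ^ 2)) t := by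
    simpa [div_eq_mul_inv] using ((hasDerivAt_inv ht.ne').const_mul a).sub_const κ
  rw [hderiv.deriv_eq, (hcoef.fun_mul (hasDerivAt_powExpDecay a κ ht)).deriv]
  ring

lemma groundState_eq_powExpDecay (ℏ ω : ℝ) :
    groundState ℏ ω = fun x => 2 ^ (-(1 / 4) : ℝ) * powExpDecay (-(1 / 4)) (ω / ℏ) |x| := by
  ext x
  rw [groundState, powExpDecay, abs_mul, abs_two, mul_rpow zero_le_two (abs_nonneg x),
    mul_assoc, neg_div, mul_div_right_comm]

lemma abs_mul_groundState_eq_powExpDecay (ℏ ω : ℝ) :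
    (fun x => |x| * groundState ℏ ω x) =
      fun x => 2 ^ (-(1 / 4) : ℝ) * powExpDecay (3 / 4) (ω / ℏ) |x| := by
  ext x
  rw [groundState_eq_powExpDecay, mul_left_comm, mul_powExpDecay (by norm_num) _ (abs_nonneg x)]
  norm_num

theorem transformed_ground_state_eigenfunction_general (ℏ ω : ℝ) (hℏ : 0 < ℏ) :
    ∀ x : ℝ, x ≠ 0 →
      -(ℏ ^ 2 / 2) * |x| * deriv (deriv (groundState ℏ ω)) x
        - (ℏ ^ 2 / 2) * deriv (deriv fun y => |y| * groundState ℏ ω y) x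
        + ω ^ 2 * |x| * groundState ℏ ω x
        + (ℏ ^ 2 / 16) * |x|⁻¹ * groundState ℏ ω x
      = (ℏ * ω / 2) * groundState ℏ ω x := by
  intro x hx
  have ht : 0 < |x| := abs_pos.mpr hx
  rw [abs_mul_groundState_eq_powExpDecay, groundState_eq_powExpDecay]
  simp only [deriv_const_mul_field', deriv_deriv_comp_abs _ hx,
    deriv_deriv_powExpDecay _ _ ht]
  have h34 : powExpDecay (3 / 4) (ω / ℏ) |x| = |x| * powExpDecay (-(1 / 4)) (ω / ℏ) |x| := by
    rw [mul_powExpDecay (by norm_num) _ ht.le]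
    norm_num
  rw [h34]
  field_simp
  ring

/-- For ℏ > 0 and ω > 0, the function `ψ(x) = |2x|^{-1/4} e^{−ω|x|/ℏ}` satisfies at
every `x ≠ 0` the eigenvalue equation of the canonically transformed
harmonic-oscillator Hamiltonian
`H' = (1/2)|q̂'|p̂'² + (1/2)p̂'²|q̂'| + ω²|q̂'| + (ℏ²/16)|q̂'|⁻¹`
(`q̂' = x·`, `p̂' = −iℏ d/dx`), i.e.
`−(ℏ²/2)|x|ψ''(x) − (ℏ²/2)(|x|ψ)''(x) + ω²|x|ψ(x) + (ℏ²/16)|x|⁻¹ψ(x) = (ℏω/2)ψ(x)`,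
so `ψ` is an eigenfunction of `H'` with eigenvalue `ℏω/2`. -/
theorem transformed_ground_state_eigenfunction (ℏ ω : ℝ) (hℏ : 0 < ℏ) (hω : 0 < ω) :
    ∀ x : ℝ, x ≠ 0 →
      -(ℏ ^ 2 / 2) * |x| * deriv (deriv (groundState ℏ ω)) x
        - (ℏ ^ 2 / 2) * deriv (deriv fun y => |y| * groundState ℏ ω y) x
        + ω ^ 2 * |x| * groundState ℏ ω x
        + (ℏ ^ 2 / 16) * |x|⁻¹ * groundState ℏ ω x
      = (ℏ * ω / 2) * groundState ℏ ω x :=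
  transformed_ground_state_eigenfunction_general ℏ ω hℏ
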